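/- arXiv:2011.14652 — 6 statements merged into one kernel-verified Lean document; each statement's English description precedes it below -/
import Mathlib

section
/- Let Q and W be real vector spaces, let j : Q → Q be ℝ-linear with j² = −id, and let Ψ₁ : Q × Q → W be an ℝ-bilinear map that is skew-symmetric and satisfies Ψ₁(jν₁, jν₂) = −Ψ₁(ν₁, ν₂) for all ν₁, ν₂. Define Ψ₁₂ : Q × Q → W by Ψ₁₂(ν₁, ν₂) := −(1/2) Ψ₁(ν₁, jν₂). Then Ψ₁₂ is skew-symmetric, and Ψ₁(ν₁, ν₂) − Ψ₁₂(ν₁, jν₂) − Ψ₁₂(jν₁, ν₂) = 0 for all ν₁, ν₂ ∈ Q. -/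
/-- If `Ψ₁` is bilinear, skew-symmetric and satisfies
`Ψ₁(jν₁,jν₂) = -Ψ₁(ν₁,ν₂)`, then `Ψ₁₂(ν₁,ν₂) := -(1/2)Ψ₁(ν₁,jν₂)` is
skew-symmetric and `Ψ₁(ν₁,ν₂) - Ψ₁₂(ν₁,jν₂) - Ψ₁₂(jν₁,ν₂) = 0`. -/
theorem stmt2 {Q W : Type*} [AddCommGroup Q] [Module ℝ Q]
    [AddCommGroup W] [Module ℝ W]
    (j : Q →ₗ[ℝ] Q) (hj : ∀ ν, j (j ν) = -ν)
    (Ψ₁ : Q →ₗ[ℝ] Q →ₗ[ℝ] W)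
    (hskew : ∀ ν₁ ν₂, Ψ₁ ν₁ ν₂ = -Ψ₁ ν₂ ν₁)
    (hjj : ∀ ν₁ ν₂, Ψ₁ (j ν₁) (j ν₂) = -Ψ₁ ν₁ ν₂)
    (Ψ₁₂ : Q → Q → W)
    (hdef : ∀ ν₁ ν₂, Ψ₁₂ ν₁ ν₂ = -((1/2 : ℝ) • Ψ₁ ν₁ (j ν₂))) :
    (∀ ν₁ ν₂, Ψ₁₂ ν₁ ν₂ = -Ψ₁₂ ν₂ ν₁) ∧
    (∀ ν₁ ν₂, Ψ₁ ν₁ ν₂ - Ψ₁₂ ν₁ (j ν₂) - Ψ₁₂ (j ν₁) ν₂ = 0) := by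
  have key : ∀ ν₁ ν₂, Ψ₁ ν₁ (j ν₂) = Ψ₁ (j ν₁) ν₂ := by
    intro ν₁ ν₂
    have := hjj ν₁ (j ν₂)
    rw [hj] at this
    have h2 : Ψ₁ (j ν₁) (-ν₂) = -Ψ₁ (j ν₁) ν₂ := by
      rw [map_neg]
    rw [h2] at this
    exact (neg_injective this).symm
  constructor
  · intro ν₁ ν₂
    rw [hdef, hdef, neg_neg, hskew ν₁ (j ν₂), smul_neg, neg_neg, key]
  · intro ν₁ ν₂
    rw [hdef, hdef, hj, hjj, map_neg]
    module
end

section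
/- Let Q and W be real vector spaces, let j : Q → Q be ℝ-linear with j² = −id, let Ψ₁, Ψ₁₂ : Q × Q → W be ℝ-bilinear, and define Ψ₂ : Q × Q → W by Ψ₂(ν₁, ν₂) := Ψ₁(ν₁, ν₂) − Ψ₁₂(ν₁, jν₂) − Ψ₁₂(jν₁, ν₂). Then Ψ₁ = Ψ₂ if and only if Ψ₁₂(jν₁, jν₂) = Ψ₁₂(ν₁, ν₂) for all ν₁, ν₂ ∈ Q. -/
/-- With `Ψ₂(ν₁,ν₂) := Ψ₁(ν₁,ν₂) - Ψ₁₂(ν₁,jν₂) - Ψ₁₂(jν₁,ν₂)`, one has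
`Ψ₁ = Ψ₂` iff `Ψ₁₂(jν₁,jν₂) = Ψ₁₂(ν₁,ν₂)` for all `ν₁, ν₂`. -/
theorem stmt3 {Q W : Type*} [AddCommGroup Q] [Module ℝ Q]
    [AddCommGroup W] [Module ℝ W]
    (j : Q →ₗ[ℝ] Q) (hj : ∀ ν, j (j ν) = -ν)
    (Ψ₁ Ψ₁₂ : Q →ₗ[ℝ] Q →ₗ[ℝ] W)
    (Ψ₂ : Q → Q → W)
    (hdef : ∀ ν₁ ν₂, Ψ₂ ν₁ ν₂ = Ψ₁ ν₁ ν₂ - Ψ₁₂ ν₁ (j ν₂) - Ψ₁₂ (j ν₁) ν₂) :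
    (∀ ν₁ ν₂, Ψ₁ ν₁ ν₂ = Ψ₂ ν₁ ν₂) ↔
      (∀ ν₁ ν₂, Ψ₁₂ (j ν₁) (j ν₂) = Ψ₁₂ ν₁ ν₂) := by
  constructor
  · intro h ν₁ ν₂
    have h2 := h ν₁ (j ν₂)
    rw [hdef, sub_sub, eq_comm, sub_eq_self, hj, map_neg,
      neg_add_eq_sub, sub_eq_zero] at h2
    exact h2
  · intro h ν₁ ν₂
    have h2 : Ψ₁₂ (j ν₁) ν₂ = - Ψ₁₂ ν₁ (j ν₂) := by
      have h3 := h (j ν₁) ν₂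
      rw [hj] at h3
      rw [← h3, map_neg, LinearMap.neg_apply]
    rw [hdef, h2]
    abel
end

section
/- Let Q be a real vector space, b : Q × Q → Q an ℝ-bilinear skew-symmetric map, and j : Q → Q an ℝ-linear map with j² = −id whose Nijenhuis tensor with respect to b vanishes, i.e. b(ν₁,ν₂) − b(jν₁,jν₂) + j(b(jν₁,ν₂) + b(ν₁,jν₂)) = 0 for all ν₁, ν₂. Define 𝔸(ν₁,ν₂) := (1/2)(b(ν₁,ν₂) − b(jν₁,jν₂)) and, for a bilinear bracket c, the Jacobiator Jac_c(ν₁,ν₂,ν₃) := c(c(ν₁,ν₂),ν₃) + c(c(ν₂,ν₃),ν₁) + c(c(ν₃,ν₁),ν₂). Then Jac_b(jν₁,jν₂,ν₃) + Jac_b(jν₁,ν₂,jν₃) + Jac_b(ν₁,jν₂,jν₃) − Jac_b(ν₁,ν₂,ν₃) = 0 for all ν₁,ν₂,ν₃ ∈ Q if and only if 𝔸 satisfies the Jacobi identity Jac_𝔸 ≡ 0. -/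
/-- The Jacobiator of a bilinear bracket `c`. -/
def jacobiator {Q : Type*} [AddCommGroup Q] (c : Q → Q → Q) (ν₁ ν₂ ν₃ : Q) : Q :=
  c (c ν₁ ν₂) ν₃ + c (c ν₂ ν₃) ν₁ + c (c ν₃ ν₁) ν₂

/-- For a skew-symmetric ℝ-bilinear bracket `b` and `j` with
`j² = -id` whose Nijenhuis tensor w.r.t. `b` vanishes, the identity
`Jac_b(jν₁,jν₂,ν₃) + Jac_b(jν₁,ν₂,jν₃) + Jac_b(ν₁,jν₂,jν₃) - Jac_b(ν₁,ν₂,ν₃) = 0`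
holds for all `ν₁,ν₂,ν₃` iff `𝔸` satisfies the Jacobi identity. -/
theorem stmt6 {Q : Type*} [AddCommGroup Q] [Module ℝ Q]
    (b : Q →ₗ[ℝ] Q →ₗ[ℝ] Q)
    (hbskew : ∀ ν₁ ν₂, b ν₁ ν₂ = -b ν₂ ν₁)
    (j : Q →ₗ[ℝ] Q) (hj : ∀ ν, j (j ν) = -ν)
    (hN : ∀ ν₁ ν₂,
      b ν₁ ν₂ - b (j ν₁) (j ν₂) + j (b (j ν₁) ν₂ + b ν₁ (j ν₂)) = 0)
    (𝔸 : Q → Q → Q)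
    (h𝔸 : ∀ ν₁ ν₂, 𝔸 ν₁ ν₂ = (1/2 : ℝ) • (b ν₁ ν₂ - b (j ν₁) (j ν₂))) :
    (∀ ν₁ ν₂ ν₃,
        jacobiator (fun x y => b x y) (j ν₁) (j ν₂) ν₃
      + jacobiator (fun x y => b x y) (j ν₁) ν₂ (j ν₃)
      + jacobiator (fun x y => b x y) ν₁ (j ν₂) (j ν₃)
      - jacobiator (fun x y => b x y) ν₁ ν₂ ν₃ = 0) ↔
    (∀ ν₁ ν₂ ν₃, jacobiator 𝔸 ν₁ ν₂ ν₃ = 0) := by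
  -- j applied to 𝔸: from the vanishing Nijenhuis tensor
  have hjA : ∀ x y, j (𝔸 x y) = (1/2 : ℝ) • (b (j x) y + b x (j y)) := by
    intro x y
    have h := hN x y
    have h2 : b x y - b (j x) (j y) = - j (b (j x) y + b x (j y)) := by
      linear_combination (norm := abel) h
    rw [h𝔸, map_smul, h2, map_neg, hj, neg_neg]
  -- key identity: LHS = -(4 : ℝ) • Jac_𝔸
  have key : ∀ x y z,
        jacobiator (fun a c => b a c) (j x) (j y) z
      + jacobiator (fun a c => b a c) (j x) y (j z)
      + jacobiator (fun a c => b a c) x (j y) (j z)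
      - jacobiator (fun a c => b a c) x y z
      = -(4 : ℝ) • jacobiator 𝔸 x y z := by
    intro x y z
    simp only [jacobiator]
    rw [h𝔸 (𝔸 x y) z, h𝔸 (𝔸 y z) x, h𝔸 (𝔸 z x) y]
    rw [hjA x y, hjA y z, hjA z x, h𝔸 x y, h𝔸 y z, h𝔸 z x]
    simp only [map_smul, map_sub, map_add, LinearMap.smul_apply, LinearMap.sub_apply,
      LinearMap.add_apply, hj, map_neg, LinearMap.neg_apply]
    module
  constructor
  · intro h x y z
    have := key x y z
    rw [h x y z] at this
    have h4 : (-(4 : ℝ)) • jacobiator 𝔸 x y z = 0 := this.symm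
    rcases smul_eq_zero.mp h4 with h' | h'
    · norm_num at h'
    · exact h'
  · intro h x y z
    rw [key x y z, h x y z, smul_zero]
end

section
/- Let Q be a real vector space, b : Q × Q → Q an ℝ-bilinear map, and j : Q → Q an ℝ-linear map with j² = −id. Let Q_ℂ := ℂ ⊗_ℝ Q, let b_ℂ : Q_ℂ × Q_ℂ → Q_ℂ be the ℂ-bilinear extension of b, define θ : Q → Q_ℂ by θ(ν) = (1/2)(1 ⊗ ν − i ⊗ jν), and set 𝔸(ν₁,ν₂) := (1/2)(b(ν₁,ν₂) − b(jν₁,jν₂)). Then b_ℂ(θ(ν₁), θ(ν₂)) = θ(𝔸(ν₁,ν₂)) holds for all ν₁, ν₂ ∈ Q if and only if the Nijenhuis tensor of j with respect to b vanishes, i.e. b(ν₁,ν₂) − b(jν₁,jν₂) + j(b(jν₁,ν₂) + b(ν₁,jν₂)) = 0 for all ν₁, ν₂. -/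
open TensorProduct

noncomputable def imPart (Q : Type*) [AddCommGroup Q] [Module ℝ Q] :
    ℂ ⊗[ℝ] Q →ₗ[ℝ] Q :=
  TensorProduct.lift ((LinearMap.lsmul ℝ Q).comp Complex.imLm)

lemma tmul_I_eq_zero_iff {Q : Type*} [AddCommGroup Q] [Module ℝ Q] (x : Q) :
    (Complex.I / 4) ⊗ₜ[ℝ] x = 0 ↔ x = 0 := by
  constructor
  · intro h
    have h1 := congrArg (imPart Q) h
    simp [imPart, Complex.div_im] at h1
    have h4 : ((4:ℝ)⁻¹ : ℝ) • x = 0 := by simpa using h1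
    have h5 := congrArg (fun y => (4:ℝ) • y) h4
    simpa [smul_smul] using h5
  · rintro rfl; simp

/-- With `b_ℂ` the ℂ-bilinear extension of `b` to `Q_ℂ = ℂ ⊗ℝ Q`,
`θ(ν) = (1/2)(1⊗ν - i⊗jν)` and `𝔸(ν₁,ν₂) = (1/2)(b(ν₁,ν₂) - b(jν₁,jν₂))`, the
identity `b_ℂ(θν₁, θν₂) = θ(𝔸(ν₁,ν₂))` holds for all `ν₁, ν₂` iff the
Nijenhuis tensor of `j` w.r.t. `b` vanishes. -/
theorem stmt7 {Q : Type*} [AddCommGroup Q] [Module ℝ Q]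
    (b : Q →ₗ[ℝ] Q →ₗ[ℝ] Q)
    (j : Q →ₗ[ℝ] Q) (hj : ∀ ν, j (j ν) = -ν)
    (bC : (ℂ ⊗[ℝ] Q) →ₗ[ℂ] (ℂ ⊗[ℝ] Q) →ₗ[ℂ] (ℂ ⊗[ℝ] Q))
    (hbC : ∀ x y : Q, bC ((1 : ℂ) ⊗ₜ[ℝ] x) ((1 : ℂ) ⊗ₜ[ℝ] y) = (1 : ℂ) ⊗ₜ[ℝ] (b x y))
    (θ : Q → ℂ ⊗[ℝ] Q)
    (hθ : ∀ ν, θ ν = (1/2 : ℂ) ⊗ₜ[ℝ] ν - (Complex.I / 2) ⊗ₜ[ℝ] (j ν))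
    (𝔸 : Q → Q → Q)
    (h𝔸 : ∀ ν₁ ν₂, 𝔸 ν₁ ν₂ = (1/2 : ℝ) • (b ν₁ ν₂ - b (j ν₁) (j ν₂))) :
    (∀ ν₁ ν₂, bC (θ ν₁) (θ ν₂) = θ (𝔸 ν₁ ν₂)) ↔
    (∀ ν₁ ν₂,
      b ν₁ ν₂ - b (j ν₁) (j ν₂) + j (b (j ν₁) ν₂ + b ν₁ (j ν₂)) = 0) := by
  have tm : ∀ (c : ℂ) (x : Q), c ⊗ₜ[ℝ] x = c • ((1:ℂ) ⊗ₜ[ℝ] x) := by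
    intro c x; rw [smul_tmul', smul_eq_mul, mul_one]
  have key : ∀ ν₁ ν₂, bC (θ ν₁) (θ ν₂) - θ (𝔸 ν₁ ν₂)
      = (Complex.I / 4) ⊗ₜ[ℝ]
        (j (b ν₁ ν₂ - b (j ν₁) (j ν₂)) - (b (j ν₁) ν₂ + b ν₁ (j ν₂))) := by
    intro ν₁ ν₂
    rw [hθ, hθ, hθ, h𝔸]
    rw [tm (1/2 : ℂ) ν₁, tm (Complex.I/2) (j ν₁), tm (1/2 : ℂ) ν₂,
      tm (Complex.I/2) (j ν₂)]
    simp only [map_sub, map_smul, LinearMap.sub_apply, LinearMap.smul_apply, hbC,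
      tmul_smul, tmul_sub, map_add, tmul_add]
    rw [tm (1/2 : ℂ), tm (Complex.I/2), tm (Complex.I/2), tm (Complex.I/4),
      tm (Complex.I/4), tm (Complex.I/4), tm (Complex.I/4)]
    have hr : ∀ v : ℂ ⊗[ℝ] Q, (1/2 : ℝ) • v = (1/2 : ℂ) • v := by
      intro v
      rw [← algebraMap_smul ℂ (1/2 : ℝ) v]
      norm_num
    rw [tm (1/2 : ℂ) (b (j ν₁) (j ν₂))]
    rw [hr, hr]
    match_scalars
    all_goals (try ring)
    all_goals (rw [Complex.I_sq]; ring)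
  constructor
  · intro h ν₁ ν₂
    have h0 : (Complex.I / 4) ⊗ₜ[ℝ]
        (j (b ν₁ ν₂ - b (j ν₁) (j ν₂)) - (b (j ν₁) ν₂ + b ν₁ (j ν₂))) = 0 := by
      rw [← key, h, sub_self]
    have h1 := (tmul_I_eq_zero_iff _).1 h0
    have h2 : j (j (b ν₁ ν₂ - b (j ν₁) (j ν₂)) - (b (j ν₁) ν₂ + b ν₁ (j ν₂))) = 0 := by
      rw [h1, map_zero]
    rw [map_sub, hj] at h2
    rw [show (b ν₁ ν₂ - b (j ν₁) (j ν₂)) + j (b (j ν₁) ν₂ + b ν₁ (j ν₂))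
        = -(-(b ν₁ ν₂ - b (j ν₁) (j ν₂)) - j (b (j ν₁) ν₂ + b ν₁ (j ν₂))) from by abel,
      h2, neg_zero]
  · intro h ν₁ ν₂
    have h2 : j ((b ν₁ ν₂ - b (j ν₁) (j ν₂)) + j (b (j ν₁) ν₂ + b ν₁ (j ν₂))) = 0 := by
      rw [h ν₁ ν₂, map_zero]
    rw [map_add, hj] at h2
    have h0 : j (b ν₁ ν₂ - b (j ν₁) (j ν₂)) - (b (j ν₁) ν₂ + b ν₁ (j ν₂)) = 0 := by
      rw [sub_eq_add_neg]; exact h2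
    have hk := key ν₁ ν₂
    rw [h0, tmul_zero, sub_eq_zero] at hk
    exact hk
end

section
/- Let Q and W be real vector spaces, and let j₁, j₂ : Q → Q be ℝ-linear maps with j₁² = j₂² = −id and j₁ ∘ j₂ = j₂ ∘ j₁. Let Ψ : Q × Q → W be ℝ-bilinear, skew-symmetric, and satisfy Ψ(j₂ν₁, j₂ν₂) = −Ψ(ν₁, ν₂) and Ψ(j₁ν₁, j₁ν₂) = Ψ(ν₁, ν₂) for all ν₁, ν₂. Define Ψ₁₂(ν₁, ν₂) := −(1/2) Ψ(ν₁, j₂ν₂). Then Ψ₁₂ is skew-symmetric, satisfies Ψ₁₂(j₁ν₁, j₁ν₂) = Ψ₁₂(ν₁, ν₂) for all ν₁, ν₂, and Ψ(ν₁, ν₂) − Ψ₁₂(ν₁, j₂ν₂) − Ψ₁₂(j₂ν₁, ν₂) = 0 for all ν₁, ν₂ ∈ Q. -/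
/-- For commuting complex structures `j₁, j₂` on `Q` and a
skew-symmetric bilinear `Ψ` with `Ψ(j₂ν₁,j₂ν₂) = -Ψ(ν₁,ν₂)` and
`Ψ(j₁ν₁,j₁ν₂) = Ψ(ν₁,ν₂)`, the change of splitting
`Ψ₁₂(ν₁,ν₂) := -(1/2)Ψ(ν₁,j₂ν₂)` is skew-symmetric, is `j₁`-invariant, and
kills `Ψ`: `Ψ(ν₁,ν₂) - Ψ₁₂(ν₁,j₂ν₂) - Ψ₁₂(j₂ν₁,ν₂) = 0`. -/
theorem stmt10 {Q W : Type*} [AddCommGroup Q] [Module ℝ Q]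
    [AddCommGroup W] [Module ℝ W]
    (j₁ j₂ : Q →ₗ[ℝ] Q)
    (hj₁ : ∀ ν, j₁ (j₁ ν) = -ν) (hj₂ : ∀ ν, j₂ (j₂ ν) = -ν)
    (hcomm : ∀ ν, j₁ (j₂ ν) = j₂ (j₁ ν))
    (Ψ : Q →ₗ[ℝ] Q →ₗ[ℝ] W)
    (hskew : ∀ ν₁ ν₂, Ψ ν₁ ν₂ = -Ψ ν₂ ν₁)
    (hj₂Ψ : ∀ ν₁ ν₂, Ψ (j₂ ν₁) (j₂ ν₂) = -Ψ ν₁ ν₂)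
    (hj₁Ψ : ∀ ν₁ ν₂, Ψ (j₁ ν₁) (j₁ ν₂) = Ψ ν₁ ν₂)
    (Ψ₁₂ : Q → Q → W)
    (hdef : ∀ ν₁ ν₂, Ψ₁₂ ν₁ ν₂ = -((1/2 : ℝ) • Ψ ν₁ (j₂ ν₂))) :
    (∀ ν₁ ν₂, Ψ₁₂ ν₁ ν₂ = -Ψ₁₂ ν₂ ν₁) ∧
    (∀ ν₁ ν₂, Ψ₁₂ (j₁ ν₁) (j₁ ν₂) = Ψ₁₂ ν₁ ν₂) ∧
    (∀ ν₁ ν₂, Ψ ν₁ ν₂ - Ψ₁₂ ν₁ (j₂ ν₂) - Ψ₁₂ (j₂ ν₁) ν₂ = 0) := by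
  have key : ∀ ν₁ ν₂, Ψ (j₂ ν₁) ν₂ = Ψ ν₁ (j₂ ν₂) := by
    intro ν₁ ν₂
    have := hj₂Ψ ν₁ (j₂ ν₂)
    rw [hj₂ ν₂, map_neg] at this
    exact neg_injective this
  refine ⟨?_, ?_, ?_⟩
  · intro ν₁ ν₂
    rw [hdef, hdef, hskew ν₂ (j₂ ν₁), key]
    module
  · intro ν₁ ν₂
    rw [hdef, hdef, ← hcomm, hj₁Ψ]
  · intro ν₁ ν₂
    rw [hdef, hdef, hj₂ ν₂, hj₂Ψ, map_neg]
    simp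
    module
end

section
/- Let P, Q, A be real vector spaces, r : P → Q and p : P → A ℝ-linear maps, D : Q × P → P an ℝ-bilinear map (written D_ν τ), and ∇ : A × P → P an ℝ-bilinear map (written ∇_a τ). Let j : Q → Q and j_C : P → P be ℝ-linear with j² = −id and j_C² = −id, and assume: (1) r ∘ j_C = j ∘ r; (2) ∇_a ∘ j_C = j_C ∘ ∇_a for all a ∈ A; (3) D_ν τ − D_{jν}(j_C τ) + j_C(D_{jν} τ) + j_C(D_ν (j_C τ)) = 0 for all ν ∈ Q, τ ∈ P. Define the bracket b : P × P → P by b(τ₁, τ₂) := D_{r τ₁} τ₂ − ∇_{p τ₂} τ₁. Then the Nijenhuis tensor of j_C with respect to b vanishes: b(τ₁,τ₂) − b(j_Cτ₁, j_Cτ₂) + j_C (b(j_Cτ₁, τ₂) + b(τ₁, j_Cτ₂)) = 0 for all τ₁, τ₂ ∈ P. -/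
/-- Given bilinear maps `D : Q × P → P`, `∇ : A × P → P`, linear
`r : P → Q`, `p : P → A`, and complex structures `j` on `Q`, `j_C` on `P`
satisfying `r ∘ j_C = j ∘ r`, `∇_a ∘ j_C = j_C ∘ ∇_a` and the adaptedness
condition `D_ν τ - D_{jν}(j_Cτ) + j_C(D_{jν}τ) + j_C(D_ν(j_Cτ)) = 0`, the
Nijenhuis tensor of `j_C` w.r.t. `b(τ₁,τ₂) := D_{rτ₁}τ₂ - ∇_{pτ₂}τ₁` vanishes. -/
theorem stmt12 {P Q A : Type*}
    [AddCommGroup P] [Module ℝ P] [AddCommGroup Q] [Module ℝ Q]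
    [AddCommGroup A] [Module ℝ A]
    (r : P →ₗ[ℝ] Q) (p : P →ₗ[ℝ] A)
    (D : Q →ₗ[ℝ] P →ₗ[ℝ] P) (nabla : A →ₗ[ℝ] P →ₗ[ℝ] P)
    (j : Q →ₗ[ℝ] Q) (jC : P →ₗ[ℝ] P)
    (hj : ∀ ν, j (j ν) = -ν) (hjC : ∀ τ, jC (jC τ) = -τ)
    (h1 : ∀ τ, r (jC τ) = j (r τ))
    (h2 : ∀ (a : A) (τ : P), nabla a (jC τ) = jC (nabla a τ))
    (h3 : ∀ (ν : Q) (τ : P),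
      D ν τ - D (j ν) (jC τ) + jC (D (j ν) τ) + jC (D ν (jC τ)) = 0)
    (b : P → P → P)
    (hb : ∀ τ₁ τ₂, b τ₁ τ₂ = D (r τ₁) τ₂ - nabla (p τ₂) τ₁) :
    ∀ τ₁ τ₂,
      b τ₁ τ₂ - b (jC τ₁) (jC τ₂) + jC (b (jC τ₁) τ₂ + b τ₁ (jC τ₂)) = 0 := by
  intro τ₁ τ₂
  have key := h3 (r τ₁) τ₂
  simp only [hb, h1, map_add, map_sub, h2, hjC]
  rw [← h2]
  abel_nf
  abel_nf at key
  linear_combination (norm := abel) key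
end
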